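/- arXiv:2412.19690 — 2 statements merged into one kernel-verified Lean document; each statement's English description precedes it below -/
import Mathlib

section
/- Every totally ordered Wajsberg hoop is semi-cancellative: if A is a totally ordered Wajsberg hoop and a, b, c ∈ A satisfy c < a·b, then b → (a·b) = a and a → (a·b) = b. -/
/-- A hoop: a commutative monoid (with unit `1` playing the role of `⊤`)
with an operation `⇨` satisfying the hoop identities; the underlying order
is given by `a ≤ b ↔ a ⇨ b = 1`. -/
class Hoop (A : Type*) extends CommMonoid A, HImp A, PartialOrder A where
  le_iff : ∀ a b : A, a ≤ b ↔ a ⇨ b = 1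
  himp_self : ∀ x : A, x ⇨ x = 1
  mul_himp_comm : ∀ x y : A, x * (x ⇨ y) = y * (y ⇨ x)
  himp_himp : ∀ x y z : A, x ⇨ (y ⇨ z) = (x * y) ⇨ z

/-- A Wajsberg hoop: a hoop satisfying `(x ⇨ y) ⇨ y = (y ⇨ x) ⇨ x`. -/
class WajsbergHoop (A : Type*) extends Hoop A where
  wajsberg : ∀ x y : A, (x ⇨ y) ⇨ y = (y ⇨ x) ⇨ x

section HoopLemmas

variable {A : Type*} [Hoop A]

/-- Residuation. -/
lemma Hoop.res (a b c : A) : a * b ≤ c ↔ a ≤ b ⇨ c := by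
  rw [Hoop.le_iff, Hoop.le_iff, Hoop.himp_himp]

lemma Hoop.le_one (a : A) : a ≤ 1 := by
  have h1 : a ≤ 1 ⇨ a := (Hoop.res a 1 a).1 (by rw [mul_one])
  have h2 : (1 : A) ⇨ a = a * (a ⇨ 1) := by
    have := Hoop.mul_himp_comm (1 : A) a
    rwa [one_mul] at this
  have h3 : (a ⇨ 1) * a ≤ 1 := (Hoop.res _ _ _).2 le_rfl
  calc a ≤ 1 ⇨ a := h1
    _ = a * (a ⇨ 1) := h2
    _ ≤ 1 := by rw [mul_comm]; exact h3

lemma Hoop.mul_le_right (a b : A) : a * b ≤ b :=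
  (Hoop.res a b b).2 (by rw [Hoop.himp_self]; exact Hoop.le_one a)

lemma Hoop.mul_le_left (a b : A) : a * b ≤ a := by
  rw [mul_comm]; exact Hoop.mul_le_right b a

lemma Hoop.le_himp_self (a b : A) : a ≤ b ⇨ a :=
  (Hoop.res a b a).1 (Hoop.mul_le_left a b)

lemma Hoop.himp_eq_one_of_le {a b : A} (h : a ≤ b) : a ⇨ b = 1 :=
  (Hoop.le_iff a b).1 h

lemma Hoop.mul_himp_of_le {a b : A} (h : a ≤ b) : b * (b ⇨ a) = a := by
  rw [Hoop.mul_himp_comm b a, Hoop.himp_eq_one_of_le h, mul_one]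

end HoopLemmas

section WajsbergLemmas

variable {A : Type*} [WajsbergHoop A]

/-- Key step: if `x * r = x` and something lies strictly below `x`,
then `r = 1` (in a totally ordered Wajsberg hoop). -/
lemma WajsbergHoop.eq_one_of_mul_eq (htotal : ∀ a b : A, a ≤ b ∨ b ≤ a)
    {x r c : A} (hc : c < x) (hxr : x * r = x) : r = 1 := by
  by_contra hr
  set s := x ⇨ c with hs_def
  have hs1 : s ≠ 1 := fun h => absurd ((Hoop.le_iff x c).2 h) (not_le_of_gt hc)
  have hrs : r ⇨ s = s := by
    rw [hs_def, Hoop.himp_himp, mul_comm, hxr]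
  have hsr : s ⇨ r = r := by
    have hw := WajsbergHoop.wajsberg r s
    rw [hrs, Hoop.himp_self] at hw
    exact le_antisymm ((Hoop.le_iff _ _).2 hw.symm) (Hoop.le_himp_self r s)
  rcases htotal r s with h | h
  · exact hs1 (by rw [← hrs, Hoop.himp_eq_one_of_le h])
  · exact hr (by rw [← hsr, Hoop.himp_eq_one_of_le h])

lemma WajsbergHoop.himp_mul (htotal : ∀ a b : A, a ≤ b ∨ b ≤ a)
    {a b c : A} (h : c < a * b) : (a ⇨ a * b) = b := by
  set u := a ⇨ a * b with hu_def
  have hbu : b ≤ u := (Hoop.res b a (a * b)).1 (by rw [mul_comm])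
  have hau : a * u = a * b := Hoop.mul_himp_of_le (Hoop.mul_le_left a b)
  have hur : u * (u ⇨ b) = b := Hoop.mul_himp_of_le hbu
  have hx : (a * b) * (u ⇨ b) = a * b := by
    rw [← hau, mul_assoc, hur]; exact hau.symm
  have hr1 : u ⇨ b = 1 := WajsbergHoop.eq_one_of_mul_eq htotal h hx
  exact le_antisymm ((Hoop.le_iff u b).2 hr1) hbu

end WajsbergLemmas

/-- Every totally ordered Wajsberg hoop is semi-cancellative:
`c < a * b` implies `b ⇨ a * b = a` and `a ⇨ a * b = b`. -/
theorem wajsberg_semiCancellative {A : Type*} [WajsbergHoop A]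
    (htotal : ∀ a b : A, a ≤ b ∨ b ≤ a) :
    ∀ a b c : A, c < a * b → (b ⇨ a * b) = a ∧ (a ⇨ a * b) = b := by
  intro a b c h
  constructor
  · have h' : c < b * a := by rwa [mul_comm]
    have := WajsbergHoop.himp_mul htotal h'
    rwa [mul_comm] at this
  · exact WajsbergHoop.himp_mul htotal h
end

section
/- Let W be a totally ordered Wajsberg hoop with least element 0 and let a ∈ W satisfy a^{n+1} < a^n for all n ∈ ℕ. Then the set B = {a^n : n ∈ ℕ} ∪ {a^n → 0 : n ∈ ℕ} contains ⊤ and is closed under the operations · and →; in particular the following computation rules hold for all m, n ∈ ℕ: a^n·a^m = a^{n+m}, (a^n → 0) → a^m = ⊤, a^n → (a^m → 0) = a^{n+m} → 0, (a^n → 0) → (a^m → 0) = a^m → a^n, a^m·(a^n → 0) = (a^m → a^n) → 0, and (a^m → 0)·(a^n → 0) = 0. -/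
section HoopLemmas

variable {A : Type*} [WajsbergHoop A]

private lemma hh (x y z : A) : x ⇨ (y ⇨ z) = (x * y) ⇨ z := Hoop.himp_himp x y z
private lemma hs (x : A) : x ⇨ x = 1 := Hoop.himp_self x
private lemma mhc (x y : A) : x * (x ⇨ y) = y * (y ⇨ x) := Hoop.mul_himp_comm x y
private lemma leiff {x y : A} : x ≤ y ↔ x ⇨ y = 1 := Hoop.le_iff x y

private lemma one_himp (x : A) : (1 : A) ⇨ x = x := by
  have s1 : x ⇨ ((1:A) ⇨ x) = 1 := by rw [hh, mul_one, hs]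
  have s2 : x = (1 ⇨ x) * ((1 ⇨ x) ⇨ x) := by
    have := mhc x (1 ⇨ x); rw [s1, mul_one] at this; exact this
  have s3 : (1:A) ⇨ x = x * (x ⇨ 1) := by
    have := mhc (1:A) x; rwa [one_mul] at this
  have s5 : (1:A) ⇨ (x ⇨ 1) = x ⇨ 1 := by rw [hh, one_mul]
  have s6 : (x ⇨ 1) * ((x ⇨ 1) ⇨ 1) = x ⇨ 1 := by
    have := mhc (x ⇨ 1) 1; rw [one_mul, s5] at this; exact this
  have s4 : ((1:A) ⇨ x) ⇨ x = (x ⇨ 1) ⇨ 1 := by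
    rw [s3, mul_comm x (x ⇨ 1), ← hh, hs]
  have key : x = x * ((x ⇨ 1) * ((x ⇨ 1) ⇨ 1)) := by
    rw [← mul_assoc, ← s3, ← s4]; exact s2
  rw [s6] at key
  rw [s3]; exact key.symm

variable (z : A)

private lemma z_himp (hz : ∀ x : A, z ≤ x) (x : A) : z ⇨ x = 1 := leiff.mp (hz x)

private lemma mul_z (hz : ∀ x : A, z ≤ x) (x : A) : x * z = z := by
  refine le_antisymm ?_ (hz _)
  rw [leiff, mul_comm x z, ← hh, z_himp z hz]

private lemma himp_one (hz : ∀ x : A, z ≤ x) (x : A) : x ⇨ 1 = 1 := by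
  rw [← hs z, hh, mul_z z hz]

private lemma mul_le_l (hz : ∀ x : A, z ≤ x) (x y : A) : x * y ≤ x := by
  rw [leiff, mul_comm x y, ← hh, hs, himp_one z hz]

private lemma resid {x y c : A} : x * y ≤ c ↔ x ≤ y ⇨ c := by
  rw [leiff, leiff, hh]

private lemma ddn (hz : ∀ x : A, z ≤ x) (x : A) : (x ⇨ z) ⇨ z = x := by
  rw [WajsbergHoop.wajsberg, z_himp z hz, one_himp]

private lemma himp_antitone (hz : ∀ x : A, z ≤ x) {x y : A} (h : x ≤ y) (c : A) :
    y ⇨ c ≤ x ⇨ c := by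
  rw [leiff, hh, mul_comm (y ⇨ c) x, ← hh, WajsbergHoop.wajsberg]
  exact leiff.mp (h.trans (resid.mp (mul_le_l z hz y (c ⇨ y))))

private lemma cancel (htotal : ∀ a b : A, a ≤ b ∨ b ≤ a) (hz : ∀ x : A, z ≤ x)
    (x y : A) (h : x * y ≠ z) : x ⇨ (x * y) = y := by
  have hxt : x * (x ⇨ (x * y)) = x * y := by
    rw [mhc x (x*y), leiff.mp (mul_le_l z hz x y), mul_one]
  rcases htotal (y ⇨ z) x with hq | hq
  · have hyt : y ≤ x ⇨ (x * y) := resid.mp (le_of_eq (mul_comm y x))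
    have hpq : (x ⇨ (x*y)) ⇨ z ≤ y ⇨ z := himp_antitone z hz hyt z
    have hpx : (x ⇨ (x*y)) ⇨ z ≤ x := hpq.trans hq
    have key : x ⇨ ((x ⇨ (x*y)) ⇨ z) = x ⇨ (y ⇨ z) := by
      rw [hh, hh, hxt]
    have e1 : x * (x ⇨ ((x ⇨ (x*y)) ⇨ z)) = (x ⇨ (x*y)) ⇨ z := by
      rw [mhc, leiff.mp hpx, mul_one]
    have e2 : x * (x ⇨ (y ⇨ z)) = y ⇨ z := by
      rw [mhc, leiff.mp hq, mul_one]
    have e3 : (x ⇨ (x*y)) ⇨ z = y ⇨ z := by rw [← e1, key, e2]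
    have e4 := congrArg (fun w => w ⇨ z) e3
    simpa [ddn z hz] using e4
  · exact absurd (le_antisymm (resid.mpr hq) (hz _)) h

variable (a : A)

private lemma pow_ne_z (hz : ∀ x : A, z ≤ x) (ha : ∀ n : ℕ, a ^ (n + 1) < a ^ n)
    (k : ℕ) : a ^ k ≠ z := by
  intro h
  have h1 := ha k
  rw [pow_succ, h, mul_comm z a, mul_z z hz] at h1
  exact lt_irrefl _ h1

private lemma pow_le_pow' (hz : ∀ x : A, z ≤ x) {m n : ℕ} (h : m ≤ n) :
    a ^ n ≤ a ^ m := by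
  obtain ⟨k, rfl⟩ := Nat.exists_eq_add_of_le h
  rw [pow_add]; exact mul_le_l z hz _ _

private lemma himp_pow_add (htotal : ∀ a b : A, a ≤ b ∨ b ≤ a)
    (hz : ∀ x : A, z ≤ x) (ha : ∀ n : ℕ, a ^ (n + 1) < a ^ n) (n k : ℕ) :
    a ^ n ⇨ a ^ (n + k) = a ^ k := by
  rw [pow_add]
  exact cancel z htotal hz _ _
    (by rw [← pow_add]; exact pow_ne_z z a hz ha (n + k))

private lemma neg_le_pow (htotal : ∀ a b : A, a ≤ b ∨ b ≤ a)
    (hz : ∀ x : A, z ≤ x) (ha : ∀ n : ℕ, a ^ (n + 1) < a ^ n) (m n : ℕ) :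
    a ^ m ⇨ z ≤ a ^ n := by
  rcases htotal (a ^ m ⇨ z) (a ^ n) with h | h
  · exact h
  · exfalso
    have h2 : a ^ n * a ^ m ≤ z := resid.mpr h
    rw [← pow_add] at h2
    exact pow_ne_z z a hz ha (n + m) (le_antisymm h2 (hz _))

private lemma himp_pow_pow (htotal : ∀ a b : A, a ≤ b ∨ b ≤ a)
    (hz : ∀ x : A, z ≤ x) (ha : ∀ n : ℕ, a ^ (n + 1) < a ^ n) (n m : ℕ) :
    ∃ k, a ^ n ⇨ a ^ m = a ^ k := by
  rcases le_total n m with h | h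
  · obtain ⟨k, rfl⟩ := Nat.exists_eq_add_of_le h
    exact ⟨k, himp_pow_add z a htotal hz ha n k⟩
  · exact ⟨0, by rw [pow_zero]; exact leiff.mp (pow_le_pow' z a hz h)⟩

end HoopLemmas

/-- If `W` is a totally ordered Wajsberg hoop with least element `z` and
`a` satisfies `a^(n+1) < a^n` for all `n`, then
`B = {a^n : n ∈ ℕ} ∪ {a^n ⇨ z : n ∈ ℕ}` contains `⊤ = 1` and is closed under
`*` and `⇨`, with the given computation rules. -/
theorem wajsberg_subuniverse_pow {A : Type*} [WajsbergHoop A]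
    (htotal : ∀ a b : A, a ≤ b ∨ b ≤ a) (z : A) (hz : ∀ x : A, z ≤ x)
    (a : A) (ha : ∀ n : ℕ, a ^ (n + 1) < a ^ n) :
    (1 : A) ∈ ({x : A | ∃ n : ℕ, x = a ^ n} ∪ {x : A | ∃ n : ℕ, x = a ^ n ⇨ z}) ∧
    (∀ x ∈ ({x : A | ∃ n : ℕ, x = a ^ n} ∪ {x : A | ∃ n : ℕ, x = a ^ n ⇨ z}),
      ∀ y ∈ ({x : A | ∃ n : ℕ, x = a ^ n} ∪ {x : A | ∃ n : ℕ, x = a ^ n ⇨ z}),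
        x * y ∈ ({x : A | ∃ n : ℕ, x = a ^ n} ∪ {x : A | ∃ n : ℕ, x = a ^ n ⇨ z}) ∧
        x ⇨ y ∈ ({x : A | ∃ n : ℕ, x = a ^ n} ∪ {x : A | ∃ n : ℕ, x = a ^ n ⇨ z})) ∧
    (∀ m n : ℕ,
      a ^ n * a ^ m = a ^ (n + m) ∧
      ((a ^ n ⇨ z) ⇨ a ^ m) = 1 ∧
      (a ^ n ⇨ (a ^ m ⇨ z)) = a ^ (n + m) ⇨ z ∧
      ((a ^ n ⇨ z) ⇨ (a ^ m ⇨ z)) = a ^ m ⇨ a ^ n ∧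
      a ^ m * (a ^ n ⇨ z) = (a ^ m ⇨ a ^ n) ⇨ z ∧
      (a ^ m ⇨ z) * (a ^ n ⇨ z) = z) := by
  -- computation rules
  have r2 : ∀ m n : ℕ, ((a ^ n ⇨ z) ⇨ a ^ m) = 1 := fun m n =>
    leiff.mp (neg_le_pow z a htotal hz ha n m)
  have r3 : ∀ m n : ℕ, (a ^ n ⇨ (a ^ m ⇨ z)) = a ^ (n + m) ⇨ z := fun m n => by
    rw [hh, ← pow_add]
  have r4 : ∀ m n : ℕ, ((a ^ n ⇨ z) ⇨ (a ^ m ⇨ z)) = a ^ m ⇨ a ^ n := fun m n => by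
    rw [hh, mul_comm (a ^ n ⇨ z) (a ^ m), ← hh, ddn z hz]
  have r5 : ∀ m n : ℕ, a ^ m * (a ^ n ⇨ z) = (a ^ m ⇨ a ^ n) ⇨ z := fun m n => by
    have h1 : (a ^ m * (a ^ n ⇨ z)) ⇨ z = a ^ m ⇨ a ^ n := by
      rw [← hh, ddn z hz]
    calc a ^ m * (a ^ n ⇨ z)
        = ((a ^ m * (a ^ n ⇨ z)) ⇨ z) ⇨ z := (ddn z hz _).symm
      _ = (a ^ m ⇨ a ^ n) ⇨ z := by rw [h1]
  have r6 : ∀ m n : ℕ, (a ^ m ⇨ z) * (a ^ n ⇨ z) = z := fun m n => by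
    calc (a ^ m ⇨ z) * (a ^ n ⇨ z)
        = (((a ^ m ⇨ z) * (a ^ n ⇨ z)) ⇨ z) ⇨ z := (ddn z hz _).symm
      _ = z := by rw [← hh, ddn z hz, r2 n m, one_himp]
  refine ⟨Or.inl ⟨0, (pow_zero a).symm⟩, ?_, ?_⟩
  · rintro x (⟨n, rfl⟩ | ⟨n, rfl⟩) y (⟨m, rfl⟩ | ⟨m, rfl⟩)
    · obtain ⟨k, hk⟩ := himp_pow_pow z a htotal hz ha n m
      exact ⟨Or.inl ⟨n + m, (pow_add a n m).symm⟩, Or.inl ⟨k, hk⟩⟩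
    · obtain ⟨k, hk⟩ := himp_pow_pow z a htotal hz ha n m
      exact ⟨Or.inr ⟨k, by rw [r5 n m, hk]⟩, Or.inr ⟨n + m, r3 m n⟩⟩
    · obtain ⟨k, hk⟩ := himp_pow_pow z a htotal hz ha m n
      refine ⟨Or.inr ⟨k, ?_⟩, Or.inl ⟨0, by rw [pow_zero]; exact (r2 m n)⟩⟩
      rw [mul_comm, r5 m n, hk]
    · obtain ⟨k, hk⟩ := himp_pow_pow z a htotal hz ha m n
      refine ⟨Or.inr ⟨0, ?_⟩, Or.inl ⟨k, by rw [r4 m n, hk]⟩⟩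
      rw [pow_zero, one_himp]; exact r6 n m
  · intro m n
    exact ⟨(pow_add a n m).symm, r2 m n, r3 m n, r4 m n, r5 m n, r6 m n⟩
end
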